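/- Let w : ℕ → (0,∞) with w(n−1)/w(n) → 1, z(1) = Σ_n w(n) < ∞, and Z_{L,N}/w(N) → L z(1)^{L−1} for some fixed L ≥ 2. Then the canonical conditional product measures π_{L,N} exhibit condensation: lim_{K→∞} lim_{N→∞} π_{L,N}[M_L ≥ N−K] = 1, where M_L(η) = maxₓ ηₓ. -/

import Mathlib

/-! When `N > 2K`, at most one site can hold `N - K` or more particles, so by exchangeability
`π_{L,N}[M_L ≥ N - K] = L Σ_{n ≤ K} w(N - n) Z_{L-1,n} / Z_{L,N}`. After dividing numerator and
denominator by `w(N)`, the ratios `w(N - n) / w(N)` tend to `1` and `Z_{L,N} / w(N) → L z(1)^{L-1}`,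
so the inner limit is `Σ_{n ≤ K} Z_{L-1,n} / z(1)^{L-1}`. Since `Z_{L-1,·}` is the `(L-1)`-fold
Cauchy power of `w`, these partial sums tend to `z(1)^{L-1}`, and the outer limit is `1`. -/

open Filter Topology

/-- `L`-fold convolution of the weights: `Z_{L,N} = Σ_{η ∈ ℕ^L, Ση = N} Π_x w(η_x)`. -/
noncomputable def Zconv (w : ℕ → ℝ) (L N : ℕ) : ℝ :=
  ∑ η ∈ Finset.Nat.antidiagonalTuple L N, ∏ x, w (η x)

/-- Probability under `π_{L,N}` that the maximum occupation number is at least `N - K`. -/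
noncomputable def probMaxGe (w : ℕ → ℝ) (L N K : ℕ) : ℝ :=
  (∑ η ∈ Finset.Nat.antidiagonalTuple L N,
      if N - K ≤ Finset.univ.sup η then ∏ x, w (η x) else 0) / Zconv w L N

namespace Finset.Nat

lemma sum_antidiagonalTuple_succ {M : Type*} [AddCommMonoid M] (k N : ℕ)
    (f : (Fin (k + 1) → ℕ) → M) :
    ∑ η ∈ antidiagonalTuple (k + 1) N, f η =
      ∑ p ∈ antidiagonal N, ∑ τ ∈ antidiagonalTuple k p.2, f (Fin.cons p.1 τ) := by
  rw [Finset.sum_sigma']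
  refine Finset.sum_nbij' (fun η => ⟨(η 0, ∑ i, Fin.tail η i), Fin.tail η⟩)
    (fun p => Fin.cons p.1.1 p.2) ?_ ?_ ?_ ?_ (fun η _ => by simp)
  · intro η hη
    simp only [mem_antidiagonalTuple, Finset.mem_sigma, HasAntidiagonal.mem_antidiagonal] at hη ⊢
    exact ⟨by rw [← hη, Fin.sum_univ_succ]; rfl, trivial⟩
  · rintro ⟨p, τ⟩ hp
    simp only [Finset.mem_sigma, mem_antidiagonalTuple, HasAntidiagonal.mem_antidiagonal] at hp ⊢
    simp [Fin.sum_univ_succ, hp.1, hp.2]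
  · intro η _
    simp
  · rintro ⟨p, τ⟩ hp
    simp only [Finset.mem_sigma, mem_antidiagonalTuple, HasAntidiagonal.mem_antidiagonal] at hp
    simp [hp.2]

lemma sum_antidiagonalTuple_comp_perm {M : Type*} [AddCommMonoid M] (k N : ℕ)
    (σ : Equiv.Perm (Fin k)) (f : (Fin k → ℕ) → M) :
    ∑ η ∈ antidiagonalTuple k N, f (η ∘ σ) = ∑ η ∈ antidiagonalTuple k N, f η := by
  refine Finset.sum_nbij' (· ∘ σ) (· ∘ σ.symm) ?_ ?_ ?_ ?_ (fun _ _ => rfl) <;>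
    simp [Function.comp_def, mem_antidiagonalTuple, Equiv.sum_comp]

end Finset.Nat

open Finset

lemma ite_le_sup_eq_sum_ite {ι M : Type*} [Fintype ι] [AddCommMonoid M] {η : ι → ℕ} {N t : ℕ}
    (hη : ∑ i, η i = N) (ht : N < 2 * t) (c : M) :
    (if t ≤ univ.sup η then c else 0) = ∑ x, if t ≤ η x then c else 0 := by
  classical
  by_cases h : ∃ x, t ≤ η x
  · obtain ⟨x, hx⟩ := h
    have hunique : ∀ y, y ≠ x → ¬ t ≤ η y := fun y hyx hy => by
      have := sum_le_sum_of_subset (f := η) (subset_univ {y, x})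
      rw [sum_pair hyx, hη] at this
      omega
    rw [if_pos (hx.trans (le_sup (mem_univ x))),
      Fintype.sum_eq_single x fun y hy => if_neg (hunique y hy), if_pos hx]
  · push Not at h
    have hsup : univ.sup η < t := (Finset.sup_lt_iff (by simp; omega)).2 fun x _ => h x
    rw [if_neg hsup.not_ge, sum_eq_zero fun x _ => if_neg (h x).not_ge]

section Zconv

variable {w : ℕ → ℝ}

lemma Zconv_zero : Zconv w 0 = Pi.single 0 1 := by
  funext N
  cases N <;> simp [Zconv, Nat.antidiagonalTuple_zero_succ]

lemma Zconv_succ (m N : ℕ) :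
    Zconv w (m + 1) N = ∑ p ∈ antidiagonal N, w p.1 * Zconv w m p.2 := by
  simp only [Zconv, Nat.sum_antidiagonalTuple_succ, Fin.prod_univ_succ, Fin.cons_zero,
    Fin.cons_succ, mul_sum]

lemma Zconv_nonneg (hw : ∀ n, 0 ≤ w n) (m N : ℕ) : 0 ≤ Zconv w m N :=
  sum_nonneg fun _ _ => prod_nonneg fun _ _ => hw _

lemma hasSum_Zconv (hw : ∀ n, 0 ≤ w n) (hz : Summable w) (m : ℕ) :
    HasSum (Zconv w m) ((∑' n, w n) ^ m) := by
  induction m with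
  | zero => simpa [Zconv_zero] using hasSum_pi_single (0 : ℕ) (1 : ℝ)
  | succ m ih =>
    have hprod : Summable fun p : ℕ × ℕ => w p.1 * Zconv w m p.2 :=
      hz.mul_of_nonneg ih.summable hw (Zconv_nonneg hw m)
    have hcauchy := hz.tsum_mul_tsum_eq_tsum_sum_antidiagonal ih.summable hprod
    rw [ih.tsum_eq, ← pow_succ'] at hcauchy
    simpa only [hcauchy, ← Zconv_succ] using
      (summable_sum_mul_antidiagonal_of_summable_mul hprod).hasSum

lemma sum_ite_le_apply_zero (m N K : ℕ) (hK : K ≤ N) :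
    ∑ η ∈ Nat.antidiagonalTuple (m + 1) N, (if N - K ≤ η 0 then ∏ x, w (η x) else 0) =
      ∑ n ∈ range (K + 1), w (N - n) * Zconv w m n := by
  have hinner : ∀ p : ℕ × ℕ, ∑ τ ∈ Nat.antidiagonalTuple m p.2,
      (if N - K ≤ p.1 then w p.1 * ∏ i, w (τ i) else 0) =
        if N - K ≤ p.1 then w p.1 * Zconv w m p.2 else 0 := fun p => by
    split_ifs <;> simp [Zconv, mul_sum]
  simp only [Nat.sum_antidiagonalTuple_succ, Fin.cons_zero, Fin.prod_univ_succ, Fin.cons_succ,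
    hinner]
  rw [← Nat.sum_antidiagonal_swap, Nat.sum_antidiagonal_eq_sum_range_succ_mk,
    ← sum_range_add_sum_Ico _ (show K + 1 ≤ N + 1 by omega)]
  simp only [Prod.swap_prod_mk]
  rw [sum_eq_zero (s := Ico _ _) fun n hn => if_neg (by simp at hn; omega), add_zero]
  refine sum_congr rfl fun n hn => ?_
  rw [mem_range] at hn
  rw [if_pos (by omega)]

lemma probMaxGe_eq (m N K : ℕ) (hN : 2 * K < N) :
    probMaxGe w (m + 1) N K =
      (m + 1 : ℕ) * (∑ n ∈ range (K + 1), w (N - n) * Zconv w m n) / Zconv w (m + 1) N := by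
  have hsite : ∀ x : Fin (m + 1),
      ∑ η ∈ Nat.antidiagonalTuple (m + 1) N, (if N - K ≤ η x then ∏ y, w (η y) else 0) =
        ∑ η ∈ Nat.antidiagonalTuple (m + 1) N, (if N - K ≤ η 0 then ∏ y, w (η y) else 0) := by
    intro x
    rw [← Nat.sum_antidiagonalTuple_comp_perm _ _ (Equiv.swap 0 x)]
    refine sum_congr rfl fun η _ => ?_
    simp only [Function.comp_apply, Equiv.swap_apply_right,
      Equiv.prod_comp (Equiv.swap 0 x) fun y => w (η y)]
  rw [probMaxGe, sum_congr rfl fun η hη => ite_le_sup_eq_sum_ite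
      (Nat.mem_antidiagonalTuple.1 hη) (show N < 2 * (N - K) by omega) _,
    sum_comm, sum_congr rfl fun x _ => hsite x, sum_const, card_univ, Fintype.card_fin,
    nsmul_eq_mul, sum_ite_le_apply_zero m N K (by omega)]

lemma tendsto_apply_sub_div_apply (hw : ∀ n, w n ≠ 0)
    (hreg : Tendsto (fun n => w n / w (n + 1)) atTop (𝓝 1)) (n : ℕ) :
    Tendsto (fun N => w (N - n) / w N) atTop (𝓝 1) := by
  induction n with
  | zero => simp [div_self (hw _)]
  | succ n ih =>
    have hstep : Tendsto (fun N => w (N - (n + 1)) / w (N - n)) atTop (𝓝 1) :=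
      (hreg.comp (tendsto_sub_atTop_nat (n + 1))).congr' <| by
        filter_upwards [eventually_ge_atTop (n + 1)] with N hN
        simp [show N - (n + 1) + 1 = N - n by omega]
    simpa [div_mul_div_cancel₀ (hw _)] using hstep.mul ih

lemma tendsto_probMaxGe (hw : ∀ n, w n ≠ 0)
    (hreg : Tendsto (fun n => w n / w (n + 1)) atTop (𝓝 1)) {m : ℕ} {c : ℝ} (hc : c ≠ 0)
    (hZ : Tendsto (fun N => Zconv w (m + 1) N / w N) atTop (𝓝 ((m + 1 : ℕ) * c))) (K : ℕ) :
    Tendsto (fun N => probMaxGe w (m + 1) N K) atTop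
      (𝓝 ((∑ n ∈ range (K + 1), Zconv w m n) / c)) := by
  have hnum : Tendsto (fun N => (m + 1 : ℕ) * (∑ n ∈ range (K + 1), w (N - n) * Zconv w m n) / w N)
      atTop (𝓝 ((m + 1 : ℕ) * ∑ n ∈ range (K + 1), Zconv w m n)) := by
    simp_rw [mul_div_assoc, sum_div, mul_div_right_comm]
    exact (tendsto_finsetSum _ fun n _ =>
      by simpa using (tendsto_apply_sub_div_apply hw hreg n).mul_const (Zconv w m n)).const_mul _
  have hlim := hnum.div hZ (by positivity)
  rw [mul_div_mul_left _ _ (by positivity)] at hlim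
  refine hlim.congr' ?_
  filter_upwards [eventually_gt_atTop (2 * K)] with N hN
  rw [Pi.div_apply, probMaxGe_eq m N K hN, div_div_div_cancel_right₀ (hw N)]

end Zconv

theorem condensation_of_subexponential_general (w : ℕ → ℝ) (hw : ∀ n, 0 < w n)
    (hreg : Tendsto (fun n => w n / w (n + 1)) atTop (𝓝 1))
    (hz : Summable w) (L : ℕ) (hL : 2 ≤ L)
    (hsub : Tendsto (fun N => Zconv w L N / w N) atTop
      (𝓝 ((L : ℝ) * (∑' n, w n) ^ (L - 1)))) :
    ∃ a : ℕ → ℝ,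
      (∀ K : ℕ, Tendsto (fun N => probMaxGe w L N K) atTop (𝓝 (a K))) ∧
      Tendsto a atTop (𝓝 1) := by
  obtain ⟨m, rfl⟩ : ∃ m, L = m + 1 := ⟨L - 1, by omega⟩
  rw [Nat.add_sub_cancel] at hsub
  have hzm : (∑' n, w n) ^ m ≠ 0 := pow_ne_zero _ (hz.tsum_pos (fun n => (hw n).le) 0 (hw 0)).ne'
  refine ⟨fun K => (∑ n ∈ range (K + 1), Zconv w m n) / (∑' n, w n) ^ m,
    tendsto_probMaxGe (fun n => (hw n).ne') hreg hzm hsub, ?_⟩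
  have hpartial := ((hasSum_Zconv (fun n => (hw n).le) hz m).tendsto_sum_nat.comp
    (tendsto_add_atTop_nat 1)).div_const ((∑' n, w n) ^ m)
  rwa [div_self hzm] at hpartial

/-- Sub-exponential weights (with `z(1) < ∞` and `Z_{L,N}/w(N) → L z(1)^{L-1}`) imply
condensation: `lim_{K→∞} lim_{N→∞} π_{L,N}[M_L ≥ N-K] = 1`. -/
theorem condensation_of_subexponential (w : ℕ → ℝ) (hw : ∀ n, 0 < w n) (hw0 : w 0 = 1)
    (hreg : Tendsto (fun n => w n / w (n + 1)) atTop (𝓝 1))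
    (hz : Summable w) (L : ℕ) (hL : 2 ≤ L)
    (hsub : Tendsto (fun N => Zconv w L N / w N) atTop
      (𝓝 ((L : ℝ) * (∑' n, w n) ^ (L - 1)))) :
    ∃ a : ℕ → ℝ,
      (∀ K : ℕ, Tendsto (fun N => probMaxGe w L N K) atTop (𝓝 (a K))) ∧
      Tendsto a atTop (𝓝 1) :=
  condensation_of_subexponential_general w hw hreg hz L hL hsub
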